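/- For any satisfiable, subset-closed formula φ that respects justification, if φ is an invariant of a memory event structure E then φ is a tautology of E, i.e., every well-justified configuration C satisfies Σ(C) ⊨ φ, where well-justified configurations are generated inductively: the empty configuration is well-justified, and adding an event whose label is a write, or a read justified by some write already present, preserves well-justification. -/
import Mathlib


/-- `A` justifies `B` (pointwise): every label of `B` is justified by some label of `A`. -/
def JustSet {Lab : Type*} (just : Lab → Lab → Prop) (A B : Set Lab) : Prop :=
  ∀ b ∈ B, ∃ a ∈ A, just a b

/-- Well-justified configurations of a memory event structure, generated inductively:
the empty configuration is well-justified, and adding an event whose label is a write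
(i.e. not a read), or a read justified by some write already present, preserves
well-justification (provided the result is still a configuration). -/
inductive WellJustified {E Lab : Type*} (lab : E → Lab) (R : Set Lab)
    (isConfig : Set E → Prop) (just : Lab → Lab → Prop) : Set E → Prop where
  | empty (h : isConfig ∅) : WellJustified lab R isConfig just ∅
  | write {C : Set E} {e : E} (hC : WellJustified lab R isConfig just C)
      (hcfg : isConfig (insert e C)) (hw : lab e ∉ R) :
      WellJustified lab R isConfig just (insert e C)
  | read {C : Set E} {e : E} (hC : WellJustified lab R isConfig just C)
      (hcfg : isConfig (insert e C)) (hr : lab e ∈ R)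
      (hj : ∃ d ∈ C, lab d ∉ R ∧ just (lab d) (lab e)) :
      WellJustified lab R isConfig just (insert e C)

/-- For any satisfiable, subset-closed formula `φ` which respects justification,
if `φ` is an invariant of the memory event structure then `φ` is a tautology:
every well-justified configuration satisfies `φ`. -/
theorem stmt6 {E Lab Φ : Type*} (lab : E → Lab) (R : Set Lab)
    (isConfig : Set E → Prop) (just : Lab → Lab → Prop)
    (sat : Set Lab → Φ → Prop) (φ : Φ)
    -- φ is satisfiable
    (hsat : ∃ A : Set Lab, sat A φ)
    -- φ is subset closed
    (hsc : ∀ A B : Set Lab, A ⊆ B → sat B φ → sat A φ)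
    -- φ respects justification
    (hrj : ∀ A B : Set Lab, JustSet just A B → sat A φ → sat B φ)
    -- φ is an invariant: if the read labels of a configuration satisfy φ,
    -- then all its labels do
    (hinv : ∀ C : Set E, isConfig C → sat (lab '' C ∩ R) φ → sat (lab '' C) φ) :
    ∀ C : Set E, WellJustified lab R isConfig just C → sat (lab '' C) φ := by
  have key : ∀ C : Set E, WellJustified lab R isConfig just C →
      sat (lab '' C) φ ∧ JustSet just (lab '' C) (lab '' C ∩ R) := by
    intro C hC
    induction hC with
    | empty h =>
      constructor
      · obtain ⟨A, hA⟩ := hsat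
        simpa using hsc ∅ A (Set.empty_subset A) hA
      · intro b hb; simp at hb
    | write hC hcfg hw ih =>
      rename_i C e
      obtain ⟨ihsat, ihjust⟩ := ih
      have hsub : lab '' insert e C ∩ R ⊆ lab '' C := by
        rintro b ⟨⟨c, hc, rfl⟩, hbR⟩
        rcases hc with rfl | hc
        · exact absurd hbR hw
        · exact ⟨c, hc, rfl⟩
      have hJ : JustSet just (lab '' insert e C) (lab '' insert e C ∩ R) := by
        intro b hb
        obtain ⟨a, ha, hja⟩ := ihjust b ⟨hsub hb, hb.2⟩
        exact ⟨a, Set.image_mono (Set.subset_insert e C) ha, hja⟩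
      refine ⟨hinv _ hcfg ?_, hJ⟩
      exact hsc _ _ hsub ihsat
    | read hC hcfg hr hj ih =>
      rename_i C e
      obtain ⟨ihsat, ihjust⟩ := ih
      obtain ⟨d, hd, hdw, hdj⟩ := hj
      have hJ : JustSet just (lab '' C) (lab '' insert e C ∩ R) := by
        rintro b ⟨⟨c, hc, rfl⟩, hbR⟩
        rcases hc with rfl | hc
        · exact ⟨lab d, ⟨d, hd, rfl⟩, hdj⟩
        · exact ihjust _ ⟨⟨c, hc, rfl⟩, hbR⟩
      have hJ' : JustSet just (lab '' insert e C) (lab '' insert e C ∩ R) := by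
        intro b hb
        obtain ⟨a, ha, hja⟩ := hJ b hb
        exact ⟨a, Set.image_mono (Set.subset_insert e C) ha, hja⟩
      refine ⟨hinv _ hcfg ?_, hJ'⟩
      exact hrj _ _ hJ ihsat
  exact fun C hC => (key C hC).1
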